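/- arXiv:1207.5815 — 4 statements merged into one kernel-verified Lean document; each statement's English description precedes it below -/
import Mathlib

section
/- Let n ≥ 1, let (X_i, d_i) for i = 1,…,n be nonempty complete metric spaces, and equip X = Π_{i=1}^n X_i with the sup metric. Let φ_i : X_i → X_i satisfy d(φ_i(u), φ_i(v)) ≤ L_i·d(u,v) for all u, v ∈ X_i, where L_i ≥ 0, and let F : X → X satisfy d(F(x)_j, F(y)_j) ≤ Σ_{i=1}^n Λ_{ij}·d(x_i, y_i) for all x, y ∈ X and all j, where Λ is a nonnegative n×n real matrix. Let A be the n×n matrix with entries A_{ji} = Λ_{ij}·L_i (that is, A = Λᵀ·diag(L₁,…,L_n)). If ρ(A) < 1, then the map ℱ : X → X defined by ℱ(x) = F(φ₁(x₁),…,φ_n(x_n)) has a globally attracting fixed point. -/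
open Filter

/-- The spectral radius of a real square matrix: the supremum of the absolute values
of its complex eigenvalues. -/
noncomputable def specRad {n : ℕ} (A : Matrix (Fin n) (Fin n) ℝ) : ℝ :=
  sSup ((fun μ : ℂ => ‖μ‖) '' spectrum ℂ (A.map (fun x => (x : ℂ))))

/-!
Write `d(x, y)` for the vector of coordinate distances `(d(xᵢ, yᵢ))ᵢ`. The hypotheses give
`d(ℱx, ℱy) ≤ A d(x, y)` entrywise, and since `A ≥ 0` this iterates to `d(ℱᵏx, ℱᵏy) ≤ Aᵏ d(x, y)`;
so `ℱᵏ` is `‖Aᵏ‖`-Lipschitz for the sup metric, `‖·‖` being the `ℓ∞` operator norm. Gelfand's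
formula turns `ρ(A) < 1` into `‖Aᵏ‖ → 0`. Hence some iterate `ℱᴺ` is a contraction, its Banach
fixed point is fixed by `ℱ`, and every orbit converges to it at the rate `‖Aᵏ‖`.
-/

open Topology Function
open scoped NNReal ENNReal

theorem spectrum.tendsto_norm_pow_atTop_nhds_zero {A : Type*} [NormedRing A] [NormedAlgebra ℂ A]
    [CompleteSpace A] {a : A} (ha : spectralRadius ℂ a < 1) :
    Tendsto (fun k => ‖a ^ k‖) atTop (𝓝 0) := by
  obtain ⟨r, har, hr1⟩ := ENNReal.lt_iff_exists_nnreal_btwn.mp ha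
  have hr1 : r < 1 := by exact_mod_cast hr1
  have hbound : ∀ᶠ k : ℕ in atTop, ‖a ^ k‖ ≤ r ^ k := by
    filter_upwards [(pow_nnnorm_pow_one_div_tendsto_nhds_spectralRadius a).eventually_lt_const har,
      eventually_ge_atTop 1] with k hk hk1
    rw [one_div, ENNReal.rpow_inv_lt_iff (by positivity), ENNReal.rpow_natCast] at hk
    exact_mod_cast hk.le
  exact squeeze_zero' (.of_forall fun _ => norm_nonneg _) hbound
    (tendsto_pow_atTop_nhds_zero_of_lt_one r.2 hr1)

theorem exists_isFixedPt_tendsto_iterate_of_dist_iterate_le {α : Type*} [MetricSpace α]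
    [CompleteSpace α] [Nonempty α] {f : α → α} {c : ℕ → ℝ} (hc : Tendsto c atTop (𝓝 0))
    (hf : ∀ k x y, dist (f^[k] x) (f^[k] y) ≤ c k * dist x y) :
    ∃ p, IsFixedPt f p ∧ ∀ x, Tendsto (fun k => f^[k] x) atTop (𝓝 p) := by
  obtain ⟨N, hN⟩ := (hc.eventually (gt_mem_nhds one_pos)).exists
  have hcontr : ContractingWith (c N).toNNReal f^[N] := by
    refine ⟨by simpa using hN, LipschitzWith.of_dist_le_mul fun x y => ?_⟩
    exact (hf N x y).trans (by gcongr; exact Real.le_coe_toNNReal _)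
  set p := hcontr.fixedPoint f^[N]
  have hp : IsFixedPt f p := hcontr.isFixedPt_fixedPoint_iterate
  refine ⟨p, hp, fun x => tendsto_iff_dist_tendsto_zero.mpr ?_⟩
  refine squeeze_zero (fun _ => dist_nonneg) (fun k => ?_) (by simpa using hc.mul_const (dist x p))
  simpa only [(hp.iterate k).eq] using hf k x p

theorem dist_iterate_apply_le_sum_pow_mul {ι : Type*} [Fintype ι] [DecidableEq ι]
    {X : ι → Type*} [∀ i, PseudoMetricSpace (X i)] {G : (∀ i, X i) → ∀ i, X i}
    {A : Matrix ι ι ℝ} (hA : ∀ i j, 0 ≤ A i j)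
    (hG : ∀ x y j, dist (G x j) (G y j) ≤ ∑ i, A j i * dist (x i) (y i)) (k : ℕ) (x y : ∀ i, X i)
    (j : ι) : dist (G^[k] x j) (G^[k] y j) ≤ ∑ i, (A ^ k) j i * dist (x i) (y i) := by
  induction k generalizing j with
  | zero => simp [Matrix.one_apply]
  | succ k ih =>
    rw [iterate_succ_apply', iterate_succ_apply']
    calc dist (G (G^[k] x) j) (G (G^[k] y) j)
        ≤ ∑ i, A j i * dist (G^[k] x i) (G^[k] y i) := hG _ _ j
      _ ≤ ∑ i, A j i * ∑ l, (A ^ k) i l * dist (x l) (y l) := by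
        gcongr with i; exacts [hA j i, ih i]
      _ = ∑ l, (A ^ (k + 1)) j l * dist (x l) (y l) := by
        simp_rw [pow_succ', Matrix.mul_apply, Finset.mul_sum, Finset.sum_mul, mul_assoc]
        exact Finset.sum_comm

section LinftyOpNorm

attribute [local instance] Matrix.linftyOpNormedAddCommGroup Matrix.linftyOpNormedRing
  Matrix.linftyOpNormedAlgebra

theorem dist_le_linfty_opNorm_mul_dist {ι κ : Type*} [Fintype ι] [Fintype κ] {X : ι → Type*}
    {Y : κ → Type*} [∀ i, PseudoMetricSpace (X i)] [∀ j, PseudoMetricSpace (Y j)]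
    {x y : ∀ i, X i} {u v : ∀ j, Y j} {B : Matrix κ ι ℝ}
    (h : ∀ j, dist (u j) (v j) ≤ ∑ i, B j i * dist (x i) (y i)) :
    dist u v ≤ ‖B‖ * dist x y := by
  refine (dist_pi_le_iff (by positivity)).mpr fun j => (h j).trans ?_
  calc ∑ i, B j i * dist (x i) (y i) ≤ ∑ i, ‖B j i‖ * dist x y := by
        gcongr with i
        exacts [Real.le_norm_self _, dist_le_pi_dist x y i]
    _ ≤ ‖B‖ * dist x y := by
        rw [← Finset.sum_mul]
        gcongr
        rw [Matrix.linfty_opNorm_def]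
        have := Finset.le_sup (f := fun j => ∑ i, ‖B j i‖₊) (Finset.mem_univ j)
        simpa only [← coe_nnnorm, ← NNReal.coe_sum, NNReal.coe_le_coe] using this

theorem Matrix.linfty_opNorm_map_ofReal {m n : Type*} [Fintype m] [Fintype n]
    (B : Matrix m n ℝ) : ‖B.map ((↑) : ℝ → ℂ)‖ = ‖B‖ := by
  simp only [Matrix.linfty_opNorm_def, Matrix.map_apply, Complex.nnnorm_real]

theorem spectralRadius_map_ofReal_le_specRad {n : ℕ} (A : Matrix (Fin n) (Fin n) ℝ) :
    spectralRadius ℂ (A.map ((↑) : ℝ → ℂ)) ≤ ENNReal.ofReal (specRad A) := by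
  have hbdd : BddAbove ((fun μ : ℂ => ‖μ‖) '' spectrum ℂ (A.map ((↑) : ℝ → ℂ))) :=
    ((spectrum.isCompact _).image continuous_norm).bddAbove
  refine iSup₂_le fun μ hμ => ?_
  rw [← ENNReal.ofReal_coe_nnreal, coe_nnnorm]
  exact ENNReal.ofReal_le_ofReal (le_csSup hbdd ⟨μ, hμ, rfl⟩)

theorem tendsto_linfty_opNorm_pow_of_specRad_lt_one {n : ℕ} {A : Matrix (Fin n) (Fin n) ℝ}
    (hA : specRad A < 1) : Tendsto (fun k => ‖A ^ k‖) atTop (𝓝 0) := by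
  have := spectrum.tendsto_norm_pow_atTop_nhds_zero
    ((spectralRadius_map_ofReal_le_specRad A).trans_lt (ENNReal.ofReal_lt_one.mpr hA))
  have map_pow (k : ℕ) : (A.map ((↑) : ℝ → ℂ)) ^ k = (A ^ k).map ((↑) : ℝ → ℂ) :=
    (Matrix.map_pow A Complex.ofRealHom k).symm
  simpa only [map_pow, Matrix.linfty_opNorm_map_ofReal] using this

end LinftyOpNorm

theorem stability_of_dynamical_network_general
    {n : ℕ} (X : Fin n → Type*)
    [∀ i, MetricSpace (X i)] [∀ i, Nonempty (X i)] [∀ i, CompleteSpace (X i)]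
    (φ : ∀ i, X i → X i) (L : Fin n → ℝ) (hL : ∀ i, 0 ≤ L i)
    (hφ : ∀ i, ∀ u v : X i, dist (φ i u) (φ i v) ≤ L i * dist u v)
    (F : (∀ i, X i) → (∀ i, X i))
    (Λ : Matrix (Fin n) (Fin n) ℝ) (hΛ : ∀ i j, 0 ≤ Λ i j)
    (hF : ∀ x y : ∀ i, X i, ∀ j, dist (F x j) (F y j) ≤ ∑ i, Λ i j * dist (x i) (y i))
    (A : Matrix (Fin n) (Fin n) ℝ) (hA : ∀ j i, A j i = Λ i j * L i)
    (hρ : specRad A < 1) :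
    ∃ p : ∀ i, X i,
      F (fun i => φ i (p i)) = p ∧
      ∀ x : ∀ i, X i,
        Tendsto (fun k => (fun x : ∀ i, X i => F (fun i => φ i (x i)))^[k] x)
          atTop (nhds p) := by
  have hA_nonneg (j i : Fin n) : 0 ≤ A j i := hA j i ▸ mul_nonneg (hΛ i j) (hL i)
  have hG (x y : ∀ i, X i) (j : Fin n) :
      dist (F (fun i => φ i (x i)) j) (F (fun i => φ i (y i)) j) ≤
        ∑ i, A j i * dist (x i) (y i) := by
    refine (hF _ _ j).trans (Finset.sum_le_sum fun i _ => ?_)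
    rw [hA, mul_assoc]
    exact mul_le_mul_of_nonneg_left (hφ i _ _) (hΛ i j)
  exact exists_isFixedPt_tendsto_iterate_of_dist_iterate_le
    (tendsto_linfty_opNorm_pow_of_specRad_lt_one hρ) fun k x y =>
      dist_le_linfty_opNorm_mul_dist (dist_iterate_apply_le_sum_pow_mul hA_nonneg hG k x y)

/-- If `A = Λᵀ ⬝ diag(L₁,…,Lₙ)` has spectral radius less than `1`, then the dynamical
network `ℱ = F ∘ φ` has a globally attracting fixed point. -/
theorem stability_of_dynamical_network
    {n : ℕ} (hn : 1 ≤ n) (X : Fin n → Type*)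
    [∀ i, MetricSpace (X i)] [∀ i, Nonempty (X i)] [∀ i, CompleteSpace (X i)]
    (φ : ∀ i, X i → X i) (L : Fin n → ℝ) (hL : ∀ i, 0 ≤ L i)
    (hφ : ∀ i, ∀ u v : X i, dist (φ i u) (φ i v) ≤ L i * dist u v)
    (F : (∀ i, X i) → (∀ i, X i))
    (Λ : Matrix (Fin n) (Fin n) ℝ) (hΛ : ∀ i j, 0 ≤ Λ i j)
    (hF : ∀ x y : ∀ i, X i, ∀ j, dist (F x j) (F y j) ≤ ∑ i, Λ i j * dist (x i) (y i))
    (A : Matrix (Fin n) (Fin n) ℝ) (hA : ∀ j i, A j i = Λ i j * L i)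
    (hρ : specRad A < 1) :
    ∃ p : ∀ i, X i,
      F (fun i => φ i (p i)) = p ∧
      ∀ x : ∀ i, X i,
        Tendsto (fun k => (fun x : ∀ i, X i => F (fun i => φ i (x i)))^[k] x)
          atTop (nhds p) :=
  stability_of_dynamical_network_general X φ L hL hφ F Λ hΛ hF A hA hρ
end

section
/- Let n ≥ 1, let W be an n×n real matrix, let ε, 𝓛, c₁,…,c_n be real numbers with 𝓛 ≥ 0, and let φ_1,…,φ_n : ℝ → ℝ be continuous functions each satisfying |φ_i(u) − φ_i(v)| ≤ 𝓛·|u − v| for all u, v ∈ ℝ. Define ℱ : ℝⁿ → ℝⁿ by ℱ(x)_j = (1 − ε)·x_j + Σ_{i=1}^n W_{ij}·φ_i(x_i) + c_j. If |1 − ε| + 𝓛·ρ(|W|) < 1, then ℱ has a globally attracting fixed point (in the sup metric on ℝⁿ). -/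
/-!
Componentwise, `|ℱ x - ℱ y| ≤ A |x - y|` for the nonnegative matrix `A = |1 - ε| I + 𝓛 |W|ᵀ`,
hence `|ℱ^[k] x - ℱ^[k] y| ≤ Aᵏ |x - y|`. Spectral mapping gives
`ρ(A) ≤ |1 - ε| + 𝓛 ρ(|W|) < 1`, so by Gelfand's formula some power `Aᵐ` has `ℓ∞` operator
norm `< 1`: then `ℱ^[m]` is a contraction for the sup metric. Its fixed point is fixed by `ℱ`,
and each of the `m` subsequences `ℱ^[m q + r] x = (ℱ^[m])^[q] (ℱ^[r] x)` converges to it.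
-/

open Filter

open Function Polynomial
open scoped Matrix NNReal Topology

theorem Filter.Tendsto.atTop_of_arithmetic {α : Type*} {u : ℕ → α} {l : Filter α} {n : ℕ}
    (hn : n ≠ 0) (h : ∀ k < n, Tendsto (fun a => u (n * a + k)) atTop l) :
    Tendsto u atTop l :=
  fun _ hs => Eventually.atTop_of_arithmetic hn fun k hk => h k hk hs

theorem ContractingWith.tendsto_iterate_fixedPoint_of_iterate {α : Type*} [MetricSpace α]
    [Nonempty α] [CompleteSpace α] {f : α → α} {K : ℝ≥0} {m : ℕ} (hm : m ≠ 0)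
    (hf : ContractingWith K f^[m]) (x : α) :
    Tendsto (fun k => f^[k] x) atTop (𝓝 (fixedPoint f^[m] hf)) :=
  Tendsto.atTop_of_arithmetic hm fun r _ => by
    simpa only [iterate_add_apply, iterate_mul] using hf.tendsto_iterate_fixedPoint (f^[r] x)

theorem spectrum.exists_pow_nnnorm_lt_one {A : Type*} [NormedRing A] [NormedAlgebra ℂ A]
    [CompleteSpace A] {a : A} (ha : spectralRadius ℂ a < 1) : ∃ m ≠ 0, ‖a ^ m‖₊ < 1 := by
  obtain ⟨m, hm, hm0⟩ := ((pow_nnnorm_pow_one_div_tendsto_nhds_spectralRadius a).eventually_lt_const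
    ha |>.and (eventually_ne_atTop 0)).exists
  refine ⟨m, hm0, ?_⟩
  rw [← ENNReal.one_rpow (1 / (m : ℝ)), ENNReal.rpow_lt_rpow_iff (by positivity)] at hm
  exact_mod_cast hm

theorem spectrum.algebraMap_add_smul_eq_image {A : Type*} [NormedRing A] [NormedAlgebra ℂ A]
    [CompleteSpace A] [Nontrivial A] (r t : ℂ) (b : A) :
    spectrum ℂ (algebraMap ℂ A r + t • b) = (fun μ => r + t * μ) '' spectrum ℂ b := by
  have h := map_polynomial_aeval_of_nonempty b (C r + C t * X) (spectrum.nonempty b)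
  simp only [map_add, map_mul, aeval_C, aeval_X, eval_add, eval_mul, eval_C, eval_X] at h
  rwa [Algebra.smul_def]

theorem Matrix.spectrum_transpose {n R : Type*} [Fintype n] [DecidableEq n] [CommRing R]
    (M : Matrix n n R) : spectrum R Mᵀ = spectrum R M := by
  ext; simp [mem_spectrum_iff_not_isUnit_eval_charpoly]

attribute [local instance] Matrix.linftyOpNormedAddCommGroup Matrix.linftyOpNormedRing
  Matrix.linftyOpNormedAlgebra

section EntrywiseBound

variable {ι : Type*} [Fintype ι]

theorem Matrix.mulVec_mono_of_nonneg {M : Matrix ι ι ℝ} (hM : ∀ i j, 0 ≤ M i j) {v w : ι → ℝ}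
    (h : v ≤ w) : M *ᵥ v ≤ M *ᵥ w :=
  fun i => Finset.sum_le_sum fun j _ => mul_le_mul_of_nonneg_left (h j) (hM i j)

theorem abs_iterate_sub_le_pow_mulVec [DecidableEq ι] {F : (ι → ℝ) → ι → ℝ}
    {M : Matrix ι ι ℝ} (hM : ∀ i j, 0 ≤ M i j) (hF : ∀ x y, |F x - F y| ≤ M *ᵥ |x - y|) :
    ∀ k x y, |F^[k] x - F^[k] y| ≤ (M ^ k) *ᵥ |x - y|
  | 0, x, y => by simp
  | k + 1, x, y => by
    rw [iterate_succ_apply', iterate_succ_apply', pow_succ', ← Matrix.mulVec_mulVec]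
    exact (hF _ _).trans <|
      Matrix.mulVec_mono_of_nonneg hM (abs_iterate_sub_le_pow_mulVec hM hF k x y)

theorem lipschitzWith_of_abs_sub_le_mulVec {F : (ι → ℝ) → ι → ℝ} {M : Matrix ι ι ℝ}
    (hF : ∀ x y, |F x - F y| ≤ M *ᵥ |x - y|) : LipschitzWith ‖M‖₊ F := by
  refine LipschitzWith.of_dist_le_mul fun x y => (dist_pi_le_iff (by positivity)).2 fun j => ?_
  have habs : ‖|x - y|‖ ≤ ‖x - y‖ :=
    pi_norm_le_iff_of_nonneg (norm_nonneg _) |>.2 fun i => by simpa using norm_le_pi_norm (x - y) i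
  calc dist (F x j) (F y j) ≤ (M *ᵥ |x - y|) j := hF x y j
    _ ≤ ‖M *ᵥ |x - y|‖ := (le_abs_self _).trans (norm_le_pi_norm (M *ᵥ |x - y|) j)
    _ ≤ ‖M‖ * ‖|x - y|‖ := Matrix.linfty_opNorm_mulVec _ _
    _ ≤ ‖M‖₊ * dist x y := by rw [coe_nnnorm, dist_eq_norm]; gcongr

end EntrywiseBound

theorem Matrix.linfty_opNNNorm_map_ofReal {m n : Type*} [Fintype m] [Fintype n]
    (M : Matrix m n ℝ) : ‖M.map ((↑) : ℝ → ℂ)‖₊ = ‖M‖₊ := by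
  simp [Matrix.linfty_opNNNorm_def]

theorem norm_le_specRad_of_mem_spectrum {n : ℕ} {M : Matrix (Fin n) (Fin n) ℝ} {μ : ℂ}
    (hμ : μ ∈ spectrum ℂ (M.map ((↑) : ℝ → ℂ))) : ‖μ‖ ≤ specRad M :=
  le_csSup ((Matrix.finite_spectrum _).image _).bddAbove ⟨μ, hμ, rfl⟩

section CohenGrossberg

variable {ι : Type*} (W : Matrix ι ι ℝ) (ε 𝓛 : ℝ)

def cohenGrossbergMajorant [DecidableEq ι] : Matrix ι ι ℝ :=
  |1 - ε| • 1 + 𝓛 • (Matrix.of fun i j => |W i j|)ᵀ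

def cohenGrossbergMap [Fintype ι] (φ : ι → ℝ → ℝ) (c : ι → ℝ) (x : ι → ℝ) : ι → ℝ :=
  fun j => (1 - ε) * x j + ∑ i, W i j * φ i (x i) + c j

variable {W ε 𝓛}

theorem cohenGrossbergMajorant_nonneg [DecidableEq ι] (h𝓛 : 0 ≤ 𝓛) (i j : ι) :
    0 ≤ cohenGrossbergMajorant W ε 𝓛 i j := by
  simp only [cohenGrossbergMajorant, Matrix.add_apply, Matrix.smul_apply, Matrix.one_apply,
    Matrix.transpose_apply, Matrix.of_apply, smul_eq_mul]
  positivity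

theorem cohenGrossbergMajorant_map_ofReal [Fintype ι] [DecidableEq ι] :
    (cohenGrossbergMajorant W ε 𝓛).map ((↑) : ℝ → ℂ)
      = algebraMap ℂ _ (|1 - ε| : ℝ) + (𝓛 : ℂ) • ((Matrix.of fun i j => |W i j|).map (↑))ᵀ := by
  ext i j
  by_cases h : i = j <;> simp [cohenGrossbergMajorant, Matrix.algebraMap_matrix_apply, h]

theorem abs_cohenGrossbergMap_sub_le [Fintype ι] [DecidableEq ι] {φ : ι → ℝ → ℝ} (c : ι → ℝ)
    (hφ : ∀ i, ∀ u v : ℝ, |φ i u - φ i v| ≤ 𝓛 * |u - v|) (x y : ι → ℝ) :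
    |cohenGrossbergMap W ε φ c x - cohenGrossbergMap W ε φ c y|
      ≤ cohenGrossbergMajorant W ε 𝓛 *ᵥ |x - y| := by
  intro j
  have hsum : |∑ i, W i j * (φ i (x i) - φ i (y i))| ≤ 𝓛 * ∑ i, |W i j| * |x i - y i| := by
    rw [Finset.mul_sum]
    refine (Finset.abs_sum_le_sum_abs _ _).trans (Finset.sum_le_sum fun i _ => ?_)
    rw [abs_mul, mul_left_comm]
    exact mul_le_mul_of_nonneg_left (hφ i _ _) (abs_nonneg _)
  calc |cohenGrossbergMap W ε φ c x j - cohenGrossbergMap W ε φ c y j|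
      = |(1 - ε) * (x j - y j) + ∑ i, W i j * (φ i (x i) - φ i (y i))| := by
        simp only [cohenGrossbergMap, mul_sub, Finset.sum_sub_distrib]; ring_nf
    _ ≤ |1 - ε| * |x j - y j| + 𝓛 * ∑ i, |W i j| * |x i - y i| := by
        grw [abs_add_le, abs_mul, hsum]
    _ = (cohenGrossbergMajorant W ε 𝓛 *ᵥ |x - y|) j := by
        rw [cohenGrossbergMajorant, Matrix.add_mulVec, Matrix.smul_mulVec, Matrix.smul_mulVec,
          Matrix.one_mulVec]
        simp [Matrix.mulVec, dotProduct]

end CohenGrossberg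

theorem norm_le_of_mem_spectrum_cohenGrossbergMajorant {n : ℕ} [NeZero n]
    {W : Matrix (Fin n) (Fin n) ℝ} {ε 𝓛 : ℝ} (h𝓛 : 0 ≤ 𝓛) {κ : ℂ}
    (hκ : κ ∈ spectrum ℂ ((cohenGrossbergMajorant W ε 𝓛).map ((↑) : ℝ → ℂ))) :
    ‖κ‖ ≤ |1 - ε| + 𝓛 * specRad (Matrix.of fun i j => |W i j|) := by
  rw [cohenGrossbergMajorant_map_ofReal, spectrum.algebraMap_add_smul_eq_image,
    Matrix.spectrum_transpose] at hκ
  obtain ⟨μ, hμ, rfl⟩ := hκ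
  calc ‖((|1 - ε| : ℝ) : ℂ) + 𝓛 * μ‖ ≤ |1 - ε| + 𝓛 * ‖μ‖ := by
        grw [norm_add_le, norm_mul, Complex.norm_real, Complex.norm_real, Real.norm_eq_abs,
          Real.norm_eq_abs, abs_abs, abs_of_nonneg h𝓛]
    _ ≤ |1 - ε| + 𝓛 * specRad (Matrix.of fun i j => |W i j|) := by
        grw [norm_le_specRad_of_mem_spectrum hμ]

theorem exists_pow_nnnorm_cohenGrossbergMajorant_lt_one {n : ℕ} [NeZero n]
    {W : Matrix (Fin n) (Fin n) ℝ} {ε 𝓛 : ℝ} (h𝓛 : 0 ≤ 𝓛)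
    (hρ : |1 - ε| + 𝓛 * specRad (Matrix.of fun i j => |W i j|) < 1) :
    ∃ m ≠ 0, ‖cohenGrossbergMajorant W ε 𝓛 ^ m‖₊ < 1 := by
  have hρℂ : spectralRadius ℂ ((cohenGrossbergMajorant W ε 𝓛).map ((↑) : ℝ → ℂ)) < 1 :=
    spectrum.spectralRadius_lt_of_forall_lt _ fun κ hκ => by
      rw [← NNReal.coe_lt_coe, coe_nnnorm, NNReal.coe_one]
      exact (norm_le_of_mem_spectrum_cohenGrossbergMajorant h𝓛 hκ).trans_lt hρ
  obtain ⟨m, hm, hlt⟩ := spectrum.exists_pow_nnnorm_lt_one hρℂ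
  refine ⟨m, hm, ?_⟩
  rw [← Matrix.linfty_opNNNorm_map_ofReal]
  exact (Matrix.map_pow (cohenGrossbergMajorant W ε 𝓛) Complex.ofRealHom m).symm ▸ hlt

theorem cohenGrossberg_stability_general
    {n : ℕ} (hn : 1 ≤ n) (W : Matrix (Fin n) (Fin n) ℝ)
    (ε 𝓛 : ℝ) (c : Fin n → ℝ) (h𝓛 : 0 ≤ 𝓛)
    (φ : Fin n → ℝ → ℝ)
    (hφ : ∀ i, ∀ u v : ℝ, |φ i u - φ i v| ≤ 𝓛 * |u - v|)
    (hρ : |1 - ε| + 𝓛 * specRad (Matrix.of fun i j => |W i j|) < 1) :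
    ∃ p : Fin n → ℝ,
      (fun j => (1 - ε) * p j + ∑ i, W i j * φ i (p i) + c j) = p ∧
      ∀ x : Fin n → ℝ,
        Tendsto
          (fun k =>
            (fun x : Fin n → ℝ => fun j => (1 - ε) * x j + ∑ i, W i j * φ i (x i) + c j)^[k] x)
          atTop (nhds p) := by
  have : NeZero n := NeZero.of_pos hn
  obtain ⟨m, hm, hAm⟩ := exists_pow_nnnorm_cohenGrossbergMajorant_lt_one h𝓛 hρ
  have hcontr : ContractingWith _ (cohenGrossbergMap W ε φ c)^[m] :=
    ⟨hAm, lipschitzWith_of_abs_sub_le_mulVec <| abs_iterate_sub_le_pow_mulVec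
      (cohenGrossbergMajorant_nonneg h𝓛) (abs_cohenGrossbergMap_sub_le c hφ) m⟩
  exact ⟨_, hcontr.isFixedPt_fixedPoint_iterate, hcontr.tendsto_iterate_fixedPoint_of_iterate hm⟩

/-- Stability of Cohen–Grossberg neural networks: if `|1 − ε| + 𝓛·ρ(|W|) < 1` then the
network `ℱ(x)_j = (1 − ε)x_j + Σᵢ W_{ij} φᵢ(xᵢ) + c_j` has a globally attracting fixed
point. -/
theorem cohenGrossberg_stability
    {n : ℕ} (hn : 1 ≤ n) (W : Matrix (Fin n) (Fin n) ℝ)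
    (ε 𝓛 : ℝ) (c : Fin n → ℝ) (h𝓛 : 0 ≤ 𝓛)
    (φ : Fin n → ℝ → ℝ) (hφc : ∀ i, Continuous (φ i))
    (hφ : ∀ i, ∀ u v : ℝ, |φ i u - φ i v| ≤ 𝓛 * |u - v|)
    (hρ : |1 - ε| + 𝓛 * specRad (Matrix.of fun i j => |W i j|) < 1) :
    ∃ p : Fin n → ℝ,
      (fun j => (1 - ε) * p j + ∑ i, W i j * φ i (p i) + c j) = p ∧
      ∀ x : Fin n → ℝ,
        Tendsto
          (fun k =>
            (fun x : Fin n → ℝ => fun j => (1 - ε) * x j + ∑ i, W i j * φ i (x i) + c j)^[k] x)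
          atTop (nhds p) :=
  cohenGrossberg_stability_general hn W ε 𝓛 c h𝓛 φ hφ hρ
end

section
/- Let n ≥ 1 and let a, b, ε, c₁,…,c_n be real numbers. Define ℱ : ℝⁿ → ℝⁿ by ℱ(x)_j = (1 − ε)·x_j + a·(tanh(b·x_{j−1}) + tanh(b·x_{j+1})) + c_j, where the indices j − 1 and j + 1 are taken modulo n. If |1 − ε| + 2|ab| < 1, then ℱ has a globally attracting fixed point (in the sup metric on ℝⁿ). -/
/-!
The map is a contraction of `(Fin n → ℝ, sup metric)` with constant `|1 - ε| + 2|ab|`: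
`tanh` is `1`-Lipschitz since `tanh' = 1 / cosh² ≤ 1`, and every coordinate of the map depends
on three coordinates of its argument, with Lipschitz constants `|1 - ε|`, `|ab|` and `|ab|`.
The Banach fixed point theorem then gives the globally attracting fixed point.
-/

open Filter NNReal

namespace Real

theorem hasDerivAt_tanh (x : ℝ) : HasDerivAt tanh (cosh x ^ 2)⁻¹ x := by
  have hquot := (hasDerivAt_sinh x).div (hasDerivAt_cosh x) (cosh_pos x).ne'
  have hnum : cosh x * cosh x - sinh x * sinh x = 1 := by nlinarith [cosh_sq x]
  rw [hnum, one_div] at hquot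
  exact hquot.congr_of_eventuallyEq (.of_forall tanh_eq_sinh_div_cosh)

theorem lipschitzWith_tanh : LipschitzWith 1 tanh := by
  refine lipschitzWith_of_nnnorm_deriv_le (fun x => (hasDerivAt_tanh x).differentiableAt) ?_
  intro x
  rw [(hasDerivAt_tanh x).deriv, ← NNReal.coe_le_coe, coe_nnnorm, norm_inv, norm_pow,
    norm_of_nonneg (cosh_pos x).le, NNReal.coe_one]
  exact inv_le_one_of_one_le₀ (one_le_pow₀ (one_le_cosh x))

end Real

theorem LipschitzWith.pi_of_forall {α ι : Type*} [PseudoEMetricSpace α] [Fintype ι]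
    {β : ι → Type*} [∀ i, PseudoEMetricSpace (β i)] {K : ℝ≥0} {f : α → ∀ i, β i}
    (hf : ∀ i, LipschitzWith K fun x => f x i) : LipschitzWith K f :=
  fun x y => edist_pi_le_iff.mpr fun i => hf i x y

section NeighbourCoupling

variable {ι : Type*} [Fintype ι]

def neighbourCoupledMap (σ : ℝ → ℝ) (α β : ℝ) (l r : ι → ι) (c : ι → ℝ) (x : ι → ℝ) : ι → ℝ :=
  fun j => α * x j + β * (σ (x (l j)) + σ (x (r j))) + c j

theorem lipschitzWith_neighbourCoupledMap {σ : ℝ → ℝ} {K : ℝ≥0} (hσ : LipschitzWith K σ)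
    (α β : ℝ) (l r : ι → ι) (c : ι → ℝ) :
    LipschitzWith (‖α‖₊ + 2 * ‖β‖₊ * K) (neighbourCoupledMap σ α β l r c) := by
  refine LipschitzWith.pi_of_forall fun j => ?_
  have hdamp := (lipschitzWith_smul α).comp (LipschitzWith.eval (α := fun _ : ι => ℝ) j)
  have hneighbour : ∀ i, LipschitzWith K fun x : ι → ℝ => σ (x i) := fun i => by
    rw [← mul_one K]
    exact hσ.comp (LipschitzWith.eval (α := fun _ : ι => ℝ) i)
  have hcoupling := (lipschitzWith_smul β).comp ((hneighbour (l j)).add (hneighbour (r j)))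
  rw [show ‖α‖₊ + 2 * ‖β‖₊ * K = ‖α‖₊ * 1 + ‖β‖₊ * (K + K) + 0 by ring]
  exact (hdamp.add hcoupling).add (LipschitzWith.const (c j))

theorem contractingWith_neighbourCoupledMap_tanh {a b ε : ℝ} (h : |1 - ε| + 2 * |a * b| < 1)
    (l r : ι → ι) (c : ι → ℝ) :
    ContractingWith (‖1 - ε‖₊ + 2 * ‖a‖₊ * ‖b‖₊)
      (neighbourCoupledMap (fun t => Real.tanh (b * t)) (1 - ε) a l r c) := by
  refine ⟨?_, lipschitzWith_neighbourCoupledMap ?_ _ _ _ _ _⟩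
  · rw [← NNReal.coe_lt_coe]
    simpa [mul_assoc, abs_mul] using h
  · rw [← one_mul ‖b‖₊]
    exact Real.lipschitzWith_tanh.comp (lipschitzWith_smul b)

end NeighbourCoupling

/-- Stability of the ring Cohen–Grossberg network
`ℱ(x)_j = (1 − ε)x_j + a(tanh(b x_{j−1}) + tanh(b x_{j+1})) + c_j` (indices mod `n`):
if `|1 − ε| + 2|ab| < 1` then `ℱ` has a globally attracting fixed point. -/
theorem ring_network_stability
    {n : ℕ} [NeZero n] (a b ε : ℝ) (c : Fin n → ℝ)
    (hρ : |1 - ε| + 2 * |a * b| < 1) :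
    ∃ p : Fin n → ℝ,
      (fun j => (1 - ε) * p j + a * (Real.tanh (b * p (j - 1)) + Real.tanh (b * p (j + 1))) + c j)
        = p ∧
      ∀ x : Fin n → ℝ,
        Tendsto
          (fun k =>
            (fun x : Fin n → ℝ => fun j =>
              (1 - ε) * x j + a * (Real.tanh (b * x (j - 1)) + Real.tanh (b * x (j + 1))) + c j)^[k] x)
          atTop (nhds p) := by
  have hF := contractingWith_neighbourCoupledMap_tanh hρ (· - 1) (· + 1) c
  exact ⟨_, hF.fixedPoint_isFixedPt, hF.tendsto_iterate_fixedPoint⟩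
end

section
/- Let n ≥ 1, let M be an n×n real matrix, fix indices ℓ, m and reals α, 𝓛 with α + 𝓛 = M_{ℓm}, let θ ∈ ℝ, and let λ be a nonzero real number. Then det(M_θ − λ·I_{n+1}) = −λ · det(M̃_θ(λ) − λ·I_n), where M̃_θ(λ) is the n×n matrix that agrees with M in every entry except that its (ℓ, m) entry equals α·θ/λ + 𝓛. -/
/-- The modified matrix `M_θ(α, 𝓛) ∈ ℝ^{(n+1)×(n+1)}`: rows and columns are indexed by
`{0, 1, …, n}` (index `i.succ` corresponding to the original index `i`), the entry
`(ℓ, m)` of `M` is replaced by `𝓛`, the entry `(0, m)` is `α`, the entry `(ℓ, 0)` is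
`θ`, and all other entries involving the new index `0` are `0`. -/
def modMat {n : ℕ} (M : Matrix (Fin n) (Fin n) ℝ) (l m : Fin n) (α 𝓛 θ : ℝ) :
    Matrix (Fin (n + 1)) (Fin (n + 1)) ℝ :=
  Matrix.of fun i j =>
    if hi : i = 0 then (if j = m.succ then α else 0)
    else if hj : j = 0 then (if i = l.succ then θ else 0)
    else if i = l.succ ∧ j = m.succ then 𝓛
    else M (i.pred hi) (j.pred hj)

/-!
Eliminating the new index `0` with the pivot `-λ` (one step of Gaussian elimination, i.e. a
Schur complement of the `1 × 1` block) leaves `M` with its `(ℓ, m)` entry changed by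
`θ · α / λ`, the product of the only nonzero off-diagonal entries of row and column `0`.
-/

namespace Matrix

theorem det_eq_pivot_mul_det_schur {K : Type*} [Field K] {n : ℕ}
    (A : Matrix (Fin (n + 1)) (Fin (n + 1)) K) (hA : A 0 0 ≠ 0) :
    A.det = A 0 0 * (A.submatrix Fin.succ Fin.succ -
      (A 0 0)⁻¹ • vecMulVec (fun i : Fin n => A i.succ 0) (fun j : Fin n => A 0 j.succ)).det := by
  set c : Fin (n + 1) → K := Fin.cons 0 fun i => A i.succ 0 / A 0 0
  set B : Matrix (Fin (n + 1)) (Fin (n + 1)) K := of fun i j => A i j - c i * A 0 j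
  have hB0 : ∀ j, B 0 j = A 0 j := by simp [B, c]
  have hdet : A.det = B.det :=
    det_eq_of_forall_row_eq_smul_add_const c 0 rfl fun i j => by rw [hB0]; simp [B]
  have hcol : ∀ i : Fin n, B i.succ 0 = 0 := by
    intro i; simp [B, c, div_mul_cancel₀ _ hA]
  rw [hdet, det_succ_column_zero, Fin.sum_univ_succ]
  simp only [hcol, hB0, mul_zero, zero_mul, Finset.sum_const_zero, add_zero, Fin.val_zero,
    pow_zero, one_mul, Fin.succAbove_zero]
  congr 2
  ext i j
  simp [B, c, vecMulVec_apply]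
  ring

end Matrix

section modMat

variable {n : ℕ} (M : Matrix (Fin n) (Fin n) ℝ) (l m : Fin n) (α 𝓛 θ : ℝ)

@[simp] theorem modMat_zero_zero : modMat M l m α 𝓛 θ 0 0 = 0 := by
  simp [modMat, (Fin.succ_ne_zero m).symm]

@[simp] theorem modMat_zero_succ (j : Fin n) :
    modMat M l m α 𝓛 θ 0 j.succ = if j = m then α else 0 := by
  simp [modMat]

@[simp] theorem modMat_succ_zero (i : Fin n) :
    modMat M l m α 𝓛 θ i.succ 0 = if i = l then θ else 0 := by
  simp [modMat]

@[simp] theorem modMat_succ_succ (i j : Fin n) :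
    modMat M l m α 𝓛 θ i.succ j.succ = if i = l ∧ j = m then 𝓛 else M i j := by
  simp [modMat]

end modMat

theorem det_modMat_sub_smul_one_general
    {n : ℕ} (M : Matrix (Fin n) (Fin n) ℝ)
    (l m : Fin n) (α 𝓛 : ℝ)
    (θ : ℝ) (lam : ℝ) (hlam : lam ≠ 0) :
    (modMat M l m α 𝓛 θ - lam • (1 : Matrix (Fin (n + 1)) (Fin (n + 1)) ℝ)).det =
      -lam *
        ((Matrix.of fun i j => if i = l ∧ j = m then α * θ / lam + 𝓛 else M i j) -
          lam • (1 : Matrix (Fin n) (Fin n) ℝ)).det := by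
  set A := modMat M l m α 𝓛 θ - lam • (1 : Matrix (Fin (n + 1)) (Fin (n + 1)) ℝ)
  have hA00 : A 0 0 = -lam := by simp [A]
  rw [Matrix.det_eq_pivot_mul_det_schur A (by rwa [hA00, neg_ne_zero]), hA00]
  congr 2
  ext i j
  by_cases hi : i = l <;> by_cases hj : j = m <;>
    simp [A, hi, hj, Matrix.vecMulVec_apply, Matrix.one_apply, (Fin.succ_ne_zero _).symm]
  ring

/-- For nonzero `λ`, `det(M_θ − λ·I_{n+1}) = −λ · det(M̃_θ(λ) − λ·I_n)` where `M̃_θ(λ)`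
agrees with `M` except that its `(ℓ, m)` entry is `α·θ/λ + 𝓛`. -/
theorem det_modMat_sub_smul_one
    {n : ℕ} (hn : 1 ≤ n) (M : Matrix (Fin n) (Fin n) ℝ)
    (l m : Fin n) (α 𝓛 : ℝ) (hsum : α + 𝓛 = M l m)
    (θ : ℝ) (lam : ℝ) (hlam : lam ≠ 0) :
    (modMat M l m α 𝓛 θ - lam • (1 : Matrix (Fin (n + 1)) (Fin (n + 1)) ℝ)).det =
      -lam *
        ((Matrix.of fun i j => if i = l ∧ j = m then α * θ / lam + 𝓛 else M i j) -
          lam • (1 : Matrix (Fin n) (Fin n) ℝ)).det :=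
  det_modMat_sub_smul_one_general M l m α 𝓛 θ lam hlam
end
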